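/- arXiv:2003.12682 — 7 statements merged into one kernel-verified Lean document; each statement's English description precedes it below -/
import Mathlib

section
/- Let f : ℝ → ℝ be twice differentiable with f'' (u) - (2/(c₃²+1)) f'(u)² - 2 = 0 for all u in an open interval, where c₃ is a real constant. Then there exist constants a, b such that f(u) = -((c₃²+1)/2) ln |cos((2/√(c₃²+1)) u - a)| + b on that interval. -/
/-!
Writing `k = √(c₃² + 1)` and `ω = 2 / k`, the equation is the Riccati equation
`y' = ω (k + y² / k)` for `y = f'`. Along a solution `arctan (y / k)` has derivative `ω`, so
`y = k tan (ω u - a)` with `ω u - a ∈ (-π/2, π/2)`; integrating once more,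
`f = -(k / ω) log (cos (ω u - a)) + b`, and `k / ω = (c₃² + 1) / 2`.
-/

open Set Real

section OpenPreconnected

variable {s : Set ℝ}

theorem IsOpen.exists_eq_add_of_hasDerivAt (hs : IsOpen s) (hs' : IsPreconnected s)
    {f g f' : ℝ → ℝ} (hf : ∀ u ∈ s, HasDerivAt f (f' u) u)
    (hg : ∀ u ∈ s, HasDerivAt g (f' u) u) : ∃ b, ∀ u ∈ s, f u = g u + b :=
  hs.exists_eq_add_of_deriv_eq hs'
    (fun u hu => (hf u hu).differentiableAt.differentiableWithinAt)
    (fun u hu => (hg u hu).differentiableAt.differentiableWithinAt)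
    (fun u hu => by simp only [(hf u hu).deriv, (hg u hu).deriv])

theorem IsOpen.exists_eq_mul_tan_of_hasDerivAt (hs : IsOpen s) (hs' : IsPreconnected s)
    {y : ℝ → ℝ} {k ω : ℝ} (hk : k ≠ 0)
    (hy : ∀ u ∈ s, HasDerivAt y (ω * (k + y u ^ 2 / k)) u) :
    ∃ a, ∀ u ∈ s, 0 < cos (ω * u - a) ∧ y u = k * tan (ω * u - a) := by
  have harctan : ∀ u ∈ s, HasDerivAt (fun u => arctan (y u / k)) ω u := by
    intro u hu
    convert ((hy u hu).div_const k).arctan using 1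
    field_simp
  have hlin : ∀ u ∈ s, HasDerivAt (fun u => ω * u) ω u := fun u _ => by
    simpa using (hasDerivAt_id u).const_mul ω
  obtain ⟨b, hb⟩ := hs.exists_eq_add_of_hasDerivAt hs' harctan hlin
  refine ⟨-b, fun u hu => ?_⟩
  have hθ : ω * u - -b = arctan (y u / k) := by rw [hb u hu]; ring
  rw [hθ, tan_arctan]
  exact ⟨cos_arctan_pos _, by field_simp⟩

end OpenPreconnected

theorem hasDerivAt_neg_mul_log_cos {k ω a u : ℝ} (hω : ω ≠ 0) (hcos : cos (ω * u - a) ≠ 0) :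
    HasDerivAt (fun u => -(k / ω) * log (cos (ω * u - a))) (k * tan (ω * u - a)) u := by
  have hθ : HasDerivAt (fun u => ω * u - a) ω u := by
    simpa using ((hasDerivAt_id u).const_mul ω).sub_const a
  refine ((hθ.cos.log hcos).const_mul (-(k / ω))).congr_deriv ?_
  rw [tan_eq_sin_div_cos]
  field_simp

theorem stmt_0 (c₃ α β : ℝ) (f : ℝ → ℝ)
    (hd1 : ∀ u ∈ Set.Ioo α β, DifferentiableAt ℝ f u)
    (hd2 : ∀ u ∈ Set.Ioo α β, DifferentiableAt ℝ (deriv f) u)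
    (hode : ∀ u ∈ Set.Ioo α β,
      deriv (deriv f) u - (2 / (c₃ ^ 2 + 1)) * (deriv f u) ^ 2 - 2 = 0) :
    ∃ a b : ℝ, ∀ u ∈ Set.Ioo α β,
      f u = -((c₃ ^ 2 + 1) / 2) *
          Real.log |Real.cos ((2 / Real.sqrt (c₃ ^ 2 + 1)) * u - a)| + b := by
  set k := √(c₃ ^ 2 + 1)
  have hk2 : k ^ 2 = c₃ ^ 2 + 1 := sq_sqrt (by positivity)
  have hk : k ≠ 0 := (sqrt_pos.mpr (by positivity)).ne'
  have hω : 2 / k ≠ 0 := div_ne_zero two_ne_zero hk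
  have hriccati : ∀ u ∈ Ioo α β,
      HasDerivAt (deriv f) (2 / k * (k + deriv f u ^ 2 / k)) u := by
    intro u hu
    have hf'' : deriv (deriv f) u = 2 / k ^ 2 * deriv f u ^ 2 + 2 := by
      rw [hk2]; linarith [hode u hu]
    refine (hd2 u hu).hasDerivAt.congr_deriv ?_
    rw [hf'']
    field_simp
    ring
  obtain ⟨a, ha⟩ := isOpen_Ioo.exists_eq_mul_tan_of_hasDerivAt isPreconnected_Ioo hk hriccati
  obtain ⟨b, hb⟩ := isOpen_Ioo.exists_eq_add_of_hasDerivAt isPreconnected_Ioo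
    (fun u hu => (hd1 u hu).hasDerivAt)
    (fun u hu => (ha u hu).2 ▸ hasDerivAt_neg_mul_log_cos (k := k) hω (ha u hu).1.ne')
  refine ⟨a, b, fun u hu => ?_⟩
  have hcoef : k / (2 / k) = (c₃ ^ 2 + 1) / 2 := by rw [← hk2]; field_simp
  rw [hb u hu, log_abs, hcoef]
end

section
/- There are no smooth functions f, g : ℝ → ℝ defined on open intervals, with f', g', f'', g'' nowhere zero, satisfying f''(u) g'(v)² - 2 f'(u)² - 2 g'(v)² + f'(u)² g''(v) + f''(u) + g''(v) - 2 = 0 for all (u,v). -/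
lemma aux_sq_ne {α β : ℝ} (hab : α < β) {f : ℝ → ℝ}
    (hf : ContDiffOn ℝ (⊤ : ℕ∞) f (Set.Ioo α β))
    (hne : ∀ u ∈ Set.Ioo α β, deriv f u ≠ 0 ∧ deriv (deriv f) u ≠ 0) :
    ∃ u₁ ∈ Set.Ioo α β, ∃ u₂ ∈ Set.Ioo α β, (deriv f u₁)^2 ≠ (deriv f u₂)^2 := by
  by_contra h
  push_neg at h
  set u₀ := (α + β) / 2 with hu₀def
  have hu₀ : u₀ ∈ Set.Ioo α β := ⟨by simp [hu₀def]; linarith, by simp [hu₀def]; linarith⟩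
  have hopen : IsOpen (Set.Ioo α β) := isOpen_Ioo
  have hd : ContDiffOn ℝ (⊤ : ℕ∞) (deriv f) (Set.Ioo α β) :=
    hf.deriv_of_isOpen hopen (by simp)
  have hda : DifferentiableAt ℝ (deriv f) u₀ :=
    (hd.differentiableOn (by simp)).differentiableAt (hopen.mem_nhds hu₀)
  have h1 : HasDerivAt (fun u => (deriv f u) ^ 2)
      (2 * deriv f u₀ * deriv (deriv f) u₀) u₀ := by
    have := hda.hasDerivAt.pow 2
    exact this.congr_deriv (by norm_num)
  have hev : (fun u => (deriv f u) ^ 2) =ᶠ[nhds u₀] fun _ => (deriv f u₀) ^ 2 := by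
    filter_upwards [hopen.mem_nhds hu₀] with x hx
    exact h x hx u₀ hu₀
  have h2 : deriv (fun u => (deriv f u) ^ 2) u₀ = 0 := by
    rw [hev.deriv_eq]; simp
  rw [h1.deriv] at h2
  have := (hne u₀ hu₀)
  have : (2 : ℝ) * deriv f u₀ * deriv (deriv f) u₀ ≠ 0 :=
    mul_ne_zero (mul_ne_zero two_ne_zero this.1) this.2
  exact this h2

theorem stmt_2 :
    ¬ ∃ (α β γ δ : ℝ) (f g : ℝ → ℝ),
      α < β ∧ γ < δ ∧
      ContDiffOn ℝ (⊤ : ℕ∞) f (Set.Ioo α β) ∧ ContDiffOn ℝ (⊤ : ℕ∞) g (Set.Ioo γ δ) ∧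
      (∀ u ∈ Set.Ioo α β, deriv f u ≠ 0 ∧ deriv (deriv f) u ≠ 0) ∧
      (∀ v ∈ Set.Ioo γ δ, deriv g v ≠ 0 ∧ deriv (deriv g) v ≠ 0) ∧
      (∀ u ∈ Set.Ioo α β, ∀ v ∈ Set.Ioo γ δ,
        deriv (deriv f) u * (deriv g v) ^ 2 - 2 * (deriv f u) ^ 2
          - 2 * (deriv g v) ^ 2 + (deriv f u) ^ 2 * deriv (deriv g) v
          + deriv (deriv f) u + deriv (deriv g) v - 2 = 0) := by
  rintro ⟨α, β, γ, δ, f, g, hab, hcd, hf, hg, hfne, hgne, heq⟩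
  obtain ⟨u₁, hu₁, u₂, hu₂, hA⟩ := aux_sq_ne hab hf hfne
  obtain ⟨v₁, hv₁, v₂, hv₂, hC⟩ := aux_sq_ne hcd hg hgne
  set A₁ := (deriv f u₁) ^ 2
  set A₂ := (deriv f u₂) ^ 2
  set C₁ := (deriv g v₁) ^ 2
  set C₂ := (deriv g v₂) ^ 2
  set B₁ := deriv (deriv f) u₁
  set B₂ := deriv (deriv f) u₂
  set D₁ := deriv (deriv g) v₁
  set D₂ := deriv (deriv g) v₂
  have e11 := heq u₁ hu₁ v₁ hv₁
  have e12 := heq u₁ hu₁ v₂ hv₂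
  have e21 := heq u₂ hu₂ v₁ hv₁
  have e22 := heq u₂ hu₂ v₂ hv₂
  -- normalized: (Bᵢ-2)(Cⱼ+1) + (Dⱼ-2)(Aᵢ+1) = -2
  have h5 : (C₁ + 1) * ((B₁ - 2) * (A₂ + 1) - (B₂ - 2) * (A₁ + 1)) = 2 * (A₁ - A₂) := by
    linear_combination (A₂ + 1) * e11 - (A₁ + 1) * e21
  have h6 : (C₂ + 1) * ((B₁ - 2) * (A₂ + 1) - (B₂ - 2) * (A₁ + 1)) = 2 * (A₁ - A₂) := by
    linear_combination (A₂ + 1) * e12 - (A₁ + 1) * e22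
  have h7 : (C₁ - C₂) * ((B₁ - 2) * (A₂ + 1) - (B₂ - 2) * (A₁ + 1)) = 0 := by
    linear_combination h5 - h6
  have hCne : C₁ - C₂ ≠ 0 := sub_ne_zero.mpr hC
  have h8 : (B₁ - 2) * (A₂ + 1) - (B₂ - 2) * (A₁ + 1) = 0 :=
    (mul_eq_zero.mp h7).resolve_left hCne
  rw [h8, mul_zero] at h5
  have : A₁ = A₂ := by linarith
  exact hA this
end

section
/- Suppose f, g : ℝ → ℝ are smooth on open intervals, f', g', f'', g'' are nowhere zero, and 2g'(v)³ + 2f'(u)²g'(v) + g'(v)²f''(u) + f'(u)²g''(v) + f''(u) + g''(v) + 2g'(v) = 0 for all (u,v). Then a contradiction follows; i.e., no such f, g exist. -/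
private lemma aux_hasDerivAt {h : ℝ → ℝ} {s : Set ℝ} (hh : ContDiffOn ℝ (⊤ : ℕ∞) h s)
    (hs : IsOpen s) {x : ℝ} (hx : x ∈ s) :
    HasDerivAt (deriv h) (deriv (deriv h) x) x := by
  have h1 : ContDiffOn ℝ (⊤ : ℕ∞) (deriv h) s := hh.deriv_of_isOpen hs (by simp)
  exact ((h1.differentiableOn (by simp)).differentiableAt (hs.mem_nhds hx)).hasDerivAt

private lemma aux_hasDerivAt2 {h : ℝ → ℝ} {s : Set ℝ} (hh : ContDiffOn ℝ (⊤ : ℕ∞) h s)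
    (hs : IsOpen s) {x : ℝ} (hx : x ∈ s) :
    HasDerivAt (deriv (deriv h)) (deriv (deriv (deriv h)) x) x := by
  have h1 : ContDiffOn ℝ (⊤ : ℕ∞) (deriv h) s := hh.deriv_of_isOpen hs (by simp)
  exact aux_hasDerivAt h1 hs hx

private lemma aux_deriv_zero {h : ℝ → ℝ} {D x : ℝ} (hd : HasDerivAt h D x)
    (h0 : ∀ᶠ y in nhds x, h y = 0) : D = 0 := by
  have : HasDerivAt (fun _ : ℝ => (0 : ℝ)) D x :=
    hd.congr_of_eventuallyEq (by filter_upwards [h0] with y hy using hy.symm)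
  exact this.unique (hasDerivAt_const x 0)

theorem stmt_4 (α β γ δ : ℝ) (f g : ℝ → ℝ)
    (hαβ : α < β) (hγδ : γ < δ)
    (hf : ContDiffOn ℝ (⊤ : ℕ∞) f (Set.Ioo α β)) (hg : ContDiffOn ℝ (⊤ : ℕ∞) g (Set.Ioo γ δ))
    (hf0 : ∀ u ∈ Set.Ioo α β, deriv f u ≠ 0 ∧ deriv (deriv f) u ≠ 0)
    (hg0 : ∀ v ∈ Set.Ioo γ δ, deriv g v ≠ 0 ∧ deriv (deriv g) v ≠ 0)
    (hode : ∀ u ∈ Set.Ioo α β, ∀ v ∈ Set.Ioo γ δ,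
      2 * (deriv g v) ^ 3 + 2 * (deriv f u) ^ 2 * deriv g v
        + (deriv g v) ^ 2 * deriv (deriv f) u + (deriv f u) ^ 2 * deriv (deriv g) v
        + deriv (deriv f) u + deriv (deriv g) v + 2 * deriv g v = 0) :
    False := by
  set u₀ : ℝ := (α + β) / 2 with hu₀def
  have hu₀ : u₀ ∈ Set.Ioo α β := ⟨by simp only [hu₀def]; linarith, by simp only [hu₀def]; linarith⟩
  set v₀ : ℝ := (γ + δ) / 2 with hv₀def
  have hv₀ : v₀ ∈ Set.Ioo γ δ := ⟨by simp only [hv₀def]; linarith, by simp only [hv₀def]; linarith⟩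
  have hA : deriv f u₀ ≠ 0 := (hf0 u₀ hu₀).1
  have hB : deriv (deriv f) u₀ ≠ 0 := (hf0 u₀ hu₀).2
  have hAd : HasDerivAt (deriv f) (deriv (deriv f) u₀) u₀ := aux_hasDerivAt hf isOpen_Ioo hu₀
  have hBd : HasDerivAt (deriv (deriv f)) (deriv (deriv (deriv f)) u₀) u₀ :=
    aux_hasDerivAt2 hf isOpen_Ioo hu₀
  set A : ℝ := deriv f u₀
  set B : ℝ := deriv (deriv f) u₀
  set C : ℝ := deriv (deriv (deriv f)) u₀
  have hsq : HasDerivAt (fun u => deriv f u ^ 2) (2 * A * B) u₀ := by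
    simpa using hAd.fun_pow 2
  -- Step 1: differentiate the equation in u at u₀, for each v
  have key : ∀ v ∈ Set.Ioo γ δ,
      2 * A * B * (2 * deriv g v + deriv (deriv g) v) + C * ((deriv g v) ^ 2 + 1) = 0 := by
    intro v hv
    set p : ℝ := deriv g v
    set q : ℝ := deriv (deriv g) v
    have hΦ : HasDerivAt (fun u => 2 * p ^ 3 + 2 * (deriv f u) ^ 2 * p
        + p ^ 2 * deriv (deriv f) u + (deriv f u) ^ 2 * q
        + deriv (deriv f) u + q + 2 * p)
        (0 + 2 * A * B * p * 2 + p ^ 2 * C + 2 * A * B * q + C + 0 + 0) u₀ := by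
      have h1 := ((hasDerivAt_const u₀ (2 * p ^ 3)).fun_add
        (((hsq.const_mul 2).mul_const p))).fun_add (hBd.const_mul (p ^ 2))
      have h2 := ((h1.fun_add (hsq.mul_const q)).fun_add hBd).fun_add (hasDerivAt_const u₀ q)
      have h3 := h2.fun_add (hasDerivAt_const u₀ (2 * p))
      refine h3.congr_deriv ?_
      ring
    have hev : ∀ᶠ u in nhds u₀, (fun u => 2 * p ^ 3 + 2 * (deriv f u) ^ 2 * p
        + p ^ 2 * deriv (deriv f) u + (deriv f u) ^ 2 * q
        + deriv (deriv f) u + q + 2 * p) u = 0 := by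
      filter_upwards [isOpen_Ioo.mem_nhds hu₀] with u hu using hode u hu v hv
    have hz := aux_deriv_zero hΦ hev
    linear_combination hz
  -- Step 2: separation constant
  have he : 2 * A * B ≠ 0 := by positivity
  set L : ℝ := -C / (2 * A * B) with hLdef
  have hsub : ∀ v ∈ Set.Ioo γ δ,
      2 * deriv g v + deriv (deriv g) v = L * ((deriv g v) ^ 2 + 1) := by
    intro v hv
    have hk := key v hv
    rw [hLdef]
    field_simp
    linear_combination hk
  set c : ℝ := L * A ^ 2 + B + L with hcdef
  clear_value c
  have hcubic : ∀ v ∈ Set.Ioo γ δ,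
      2 * (deriv g v) ^ 3 + c * (deriv g v) ^ 2 + c = 0 := by
    intro v hv
    have h0 := hode u₀ hu₀ v hv
    have h1 := hsub v hv
    rw [hcdef]
    linear_combination h0 - (A ^ 2 + 1) * h1
  -- Step 3: differentiate the cubic identity in v at v₀
  have hp : deriv g v₀ ≠ 0 := (hg0 v₀ hv₀).1
  have hq : deriv (deriv g) v₀ ≠ 0 := (hg0 v₀ hv₀).2
  have hpd : HasDerivAt (deriv g) (deriv (deriv g) v₀) v₀ := aux_hasDerivAt hg isOpen_Ioo hv₀
  set p : ℝ := deriv g v₀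
  set q : ℝ := deriv (deriv g) v₀
  have hΨ : HasDerivAt (fun v => 2 * (deriv g v) ^ 3 + c * (deriv g v) ^ 2 + c)
      (2 * (3 * p ^ 2 * q) + c * (2 * p * q) + 0) v₀ := by
    have h1 := (((hpd.fun_pow 3).const_mul 2).fun_add ((hpd.fun_pow 2).const_mul c)).fun_add
      (hasDerivAt_const v₀ c)
    refine h1.congr_deriv ?_
    push_cast
    ring
  have hev : ∀ᶠ v in nhds v₀, (fun v => 2 * (deriv g v) ^ 3 + c * (deriv g v) ^ 2 + c) v = 0 := by
    filter_upwards [isOpen_Ioo.mem_nhds hv₀] with v hv using hcubic v hv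
  have hz := aux_deriv_zero hΨ hev
  -- Step 4: algebra
  have h1 : q * (p * (3 * p + c)) = 0 := by linear_combination hz / 2
  have h2 : 3 * p + c = 0 := by
    rcases mul_eq_zero.1 h1 with h | h
    · exact absurd h hq
    · rcases mul_eq_zero.1 h with h | h
      · exact absurd h hp
      · exact h
  have h3 := hcubic v₀ hv₀
  have h4 : p * (p ^ 2 + 3) = 0 := by linear_combination -h3 + (p ^ 2 + 1) * h2
  rcases mul_eq_zero.1 h4 with h | h
  · exact hp h
  · nlinarith [sq_nonneg p]
end

section
/- Let c be a real constant and let g be a function on an open interval with g' nowhere zero satisfying g''(v) + (2/(c²+1)) g'(v)³ + 2 g'(v) = 0. Then W(v) := g'(v)^{-2} satisfies W'(v) = 4/(c²+1) + 4 W(v), and hence W(v) = â e^{4v} - 1/(c²+1) for some constant â > 0. -/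
/-!
Differentiating `W = (g')⁻²` gives `W' = -2 g'' / g'³`, and substituting the ODE for `g''` turns
this into the affine equation `W' = 4 (W + 1/(c²+1))`. Hence `(W + 1/(c²+1)) e^{-4v}` has zero
derivative on the interval, so it is a constant `â`, positive because `W > 0`.
-/

open Real Set

theorem HasDerivAt.inv_sq {u : ℝ → ℝ} {u' x : ℝ} (hu : HasDerivAt u u' x) (hx : u x ≠ 0) :
    HasDerivAt (fun y => (u y ^ 2)⁻¹) (-2 * u' / u x ^ 3) x := by
  refine ((hu.fun_pow 2).fun_inv (pow_ne_zero 2 hx)).congr_deriv ?_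
  field_simp
  ring

theorem IsOpen.exists_pos_eq_mul_exp_sub_of_hasDerivAt {s : Set ℝ} (hs : IsOpen s)
    (hs' : IsPreconnected s) {W : ℝ → ℝ} {r k : ℝ}
    (hW : ∀ x ∈ s, HasDerivAt W (r * (W x + k)) x) (hpos : ∀ x ∈ s, 0 < W x + k) :
    ∃ a : ℝ, 0 < a ∧ ∀ x ∈ s, W x = a * exp (r * x) - k := by
  set h : ℝ → ℝ := fun x => (W x + k) * exp (-(r * x))
  have hh : ∀ x ∈ s, HasDerivAt h 0 x := by
    intro x hx
    have hexp : HasDerivAt (fun y => exp (-(r * y))) (-r * exp (-(r * x))) x := by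
      simpa [mul_comm] using ((hasDerivAt_id x).const_mul r).fun_neg.exp
    refine (((hW x hx).add_const k).fun_mul hexp).congr_deriv ?_
    ring
  obtain ⟨a, ha⟩ := hs.exists_is_const_of_deriv_eq_zero hs'
    (fun x hx => (hh x hx).differentiableAt.differentiableWithinAt)
    (fun x hx => (hh x hx).deriv)
  have hW_eq : ∀ x ∈ s, W x = a * exp (r * x) - k := by
    intro x hx
    rw [← ha x hx, mul_assoc, ← exp_add, neg_add_cancel, exp_zero]
    ring
  obtain rfl | ⟨x₀, hx₀⟩ := s.eq_empty_or_nonempty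
  · exact ⟨1, one_pos, by simp⟩
  · refine ⟨a, ?_, hW_eq⟩
    rw [← ha x₀ hx₀]
    exact mul_pos (hpos x₀ hx₀) (exp_pos _)

theorem stmt_6_general (c α β : ℝ) (g : ℝ → ℝ)
    (hd2 : ∀ v ∈ Set.Ioo α β, DifferentiableAt ℝ (deriv g) v)
    (hne : ∀ v ∈ Set.Ioo α β, deriv g v ≠ 0)
    (hode : ∀ v ∈ Set.Ioo α β,
      deriv (deriv g) v + (2 / (c ^ 2 + 1)) * (deriv g v) ^ 3 + 2 * deriv g v = 0) :
    (∀ v ∈ Set.Ioo α β,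
      deriv (fun x => ((deriv g x) ^ 2)⁻¹) v
        = 4 / (c ^ 2 + 1) + 4 * ((deriv g v) ^ 2)⁻¹) ∧
    ∃ a : ℝ, 0 < a ∧ ∀ v ∈ Set.Ioo α β,
      ((deriv g v) ^ 2)⁻¹ = a * Real.exp (4 * v) - 1 / (c ^ 2 + 1) := by
  have hW : ∀ v ∈ Ioo α β, HasDerivAt (fun x => ((deriv g x) ^ 2)⁻¹)
      (4 / (c ^ 2 + 1) + 4 * ((deriv g v) ^ 2)⁻¹) v := by
    intro v hv
    have hg'' : deriv (deriv g) v = -(2 / (c ^ 2 + 1)) * deriv g v ^ 3 - 2 * deriv g v := by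
      linarith [hode v hv]
    refine ((hd2 v hv).hasDerivAt.inv_sq (hne v hv)).congr_deriv ?_
    have := hne v hv
    rw [hg'']
    field_simp
    ring
  refine ⟨fun v hv => (hW v hv).deriv, ?_⟩
  refine isOpen_Ioo.exists_pos_eq_mul_exp_sub_of_hasDerivAt isPreconnected_Ioo
    (fun v hv => (hW v hv).congr_deriv (by ring)) (fun v hv => ?_)
  have := hne v hv
  positivity

theorem stmt_6 (c α β : ℝ) (hαβ : α < β) (g : ℝ → ℝ)
    (hd1 : ∀ v ∈ Set.Ioo α β, DifferentiableAt ℝ g v)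
    (hd2 : ∀ v ∈ Set.Ioo α β, DifferentiableAt ℝ (deriv g) v)
    (hne : ∀ v ∈ Set.Ioo α β, deriv g v ≠ 0)
    (hode : ∀ v ∈ Set.Ioo α β,
      deriv (deriv g) v + (2 / (c ^ 2 + 1)) * (deriv g v) ^ 3 + 2 * deriv g v = 0) :
    (∀ v ∈ Set.Ioo α β,
      deriv (fun x => ((deriv g x) ^ 2)⁻¹) v
        = 4 / (c ^ 2 + 1) + 4 * ((deriv g v) ^ 2)⁻¹) ∧
    ∃ a : ℝ, 0 < a ∧ ∀ v ∈ Set.Ioo α β,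
      ((deriv g v) ^ 2)⁻¹ = a * Real.exp (4 * v) - 1 / (c ^ 2 + 1) :=
  stmt_6_general c α β g hd2 hne hode
end

section
/- Let c be a real constant with c² > 1 and let f be twice differentiable on an open interval satisfying f''(u) - (2/(c²-1)) f'(u)² - 2 = 0. Then f(u) = -((c²-1)/2) ln |cos((2/√(c²-1)) u - a)| + b for some constants a, b. -/
/-!
With `g = f'`, `s = √(c² - 1)` and `ω = 2 / s` the equation is the Riccati equation
`g' = (ω / s) (g² + s²)`, along which `arctan (g / s)` grows with constant speed `ω`.
Hence `f' = s tan (ω u - a)` with `cos (ω u - a) > 0` on the interval, and integrating once more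
gives `f = -(s / ω) log (cos (ω u - a)) + b`, where `s / ω = (c² - 1) / 2`.
-/

open Real Set

section

variable {U : Set ℝ}

lemma IsOpen.exists_eq_const_of_hasDerivAt_zero (hU : IsOpen U) (hU' : IsPreconnected U)
    {F : ℝ → ℝ} (hF : ∀ u ∈ U, HasDerivAt F 0 u) : ∃ C, ∀ u ∈ U, F u = C :=
  hU.exists_is_const_of_deriv_eq_zero hU'
    (fun u hu => (hF u hu).differentiableAt.differentiableWithinAt) (fun u hu => (hF u hu).deriv)

lemma hasDerivAt_arctan_div_sub_of_riccati {g : ℝ → ℝ} {s ω u : ℝ} (hs : s ≠ 0)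
    (hg : HasDerivAt g (ω / s * (g u ^ 2 + s ^ 2)) u) :
    HasDerivAt (fun u => arctan (g u / s) - ω * u) 0 u := by
  refine ((hg.div_const s).arctan.sub ((hasDerivAt_id' u).const_mul ω)).congr_deriv ?_
  have : g u ^ 2 + s ^ 2 ≠ 0 := by positivity
  field_simp
  ring

lemma IsOpen.exists_eq_mul_tan_of_riccati (hU : IsOpen U) (hU' : IsPreconnected U)
    {g : ℝ → ℝ} {s ω : ℝ} (hs : s ≠ 0)
    (hg : ∀ u ∈ U, HasDerivAt g (ω / s * (g u ^ 2 + s ^ 2)) u) :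
    ∃ a, ∀ u ∈ U, 0 < cos (ω * u - a) ∧ g u = s * tan (ω * u - a) := by
  obtain ⟨C, hC⟩ := hU.exists_eq_const_of_hasDerivAt_zero hU'
    fun u hu => hasDerivAt_arctan_div_sub_of_riccati hs (hg u hu)
  refine ⟨-C, fun u hu => ?_⟩
  have harctan : ω * u - -C = arctan (g u / s) := by linarith [hC u hu]
  rw [harctan, tan_arctan]
  exact ⟨cos_arctan_pos _, by field_simp⟩

lemma hasDerivAt_log_cos_mul_sub {ω a u : ℝ} (hcos : cos (ω * u - a) ≠ 0) :
    HasDerivAt (fun u => log (cos (ω * u - a))) (-(ω * tan (ω * u - a))) u := by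
  refine ((((hasDerivAt_id' u).const_mul ω).sub_const a).cos.log hcos).congr_deriv ?_
  rw [tan_eq_sin_div_cos]
  ring

lemma IsOpen.exists_eq_log_cos_of_hasDerivAt_mul_tan (hU : IsOpen U) (hU' : IsPreconnected U)
    {f : ℝ → ℝ} {s ω a : ℝ} (hω : ω ≠ 0) (hcos : ∀ u ∈ U, 0 < cos (ω * u - a))
    (hf : ∀ u ∈ U, HasDerivAt f (s * tan (ω * u - a)) u) :
    ∃ b, ∀ u ∈ U, f u = -(s / ω) * log |cos (ω * u - a)| + b := by
  obtain ⟨b, hb⟩ := hU.exists_eq_const_of_hasDerivAt_zero hU'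
      (F := fun u => f u + s / ω * log (cos (ω * u - a))) fun u hu =>
    ((hf u hu).add ((hasDerivAt_log_cos_mul_sub (hcos u hu).ne').const_mul (s / ω))).congr_deriv
      (by field_simp; ring)
  refine ⟨b, fun u hu => ?_⟩
  rw [abs_of_pos (hcos u hu), ← hb u hu]
  ring

end

theorem stmt_10 (c α β : ℝ) (hc : 1 < c ^ 2) (f : ℝ → ℝ)
    (hd1 : ∀ u ∈ Set.Ioo α β, DifferentiableAt ℝ f u)
    (hd2 : ∀ u ∈ Set.Ioo α β, DifferentiableAt ℝ (deriv f) u)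
    (hode : ∀ u ∈ Set.Ioo α β,
      deriv (deriv f) u - (2 / (c ^ 2 - 1)) * (deriv f u) ^ 2 - 2 = 0) :
    ∃ a b : ℝ, ∀ u ∈ Set.Ioo α β,
      f u = -((c ^ 2 - 1) / 2) *
          Real.log |Real.cos ((2 / Real.sqrt (c ^ 2 - 1)) * u - a)| + b := by
  set s := √(c ^ 2 - 1)
  have hs : 0 < s := sqrt_pos.mpr (by linarith)
  have hs2 : s ^ 2 = c ^ 2 - 1 := sq_sqrt (by linarith)
  have hriccati : ∀ u ∈ Ioo α β,
      HasDerivAt (deriv f) (2 / s / s * (deriv f u ^ 2 + s ^ 2)) u := fun u hu => by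
    refine (hd2 u hu).hasDerivAt.congr_deriv ?_
    rw [div_div, ← sq, mul_add, div_mul_cancel₀ _ (pow_pos hs 2).ne', hs2]
    linarith [hode u hu]
  obtain ⟨a, ha⟩ := isOpen_Ioo.exists_eq_mul_tan_of_riccati isPreconnected_Ioo hs.ne' hriccati
  obtain ⟨b, hb⟩ := isOpen_Ioo.exists_eq_log_cos_of_hasDerivAt_mul_tan isPreconnected_Ioo
    (by positivity) (fun u hu => (ha u hu).1)
    (fun u hu => (ha u hu).2 ▸ (hd1 u hu).hasDerivAt)
  refine ⟨a, b, fun u hu => ?_⟩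
  have hratio : s / (2 / s) = (c ^ 2 - 1) / 2 := by
    rw [← hs2]
    field_simp
  rw [hb u hu, hratio]
end

section
/- Suppose f, g are smooth on open intervals with f', g', f'', g'' nowhere zero and satisfy 2g'³ - 2f'²g' + g'²f'' + f'²g'' - f'' + g'' - 2g' = 0 identically in (u,v). Then a contradiction follows; no such f, g exist. -/
private lemma sq_aux13 {x y z : ℝ} (hxy : x ≠ y) (hxz : x ≠ z) (hyz : y ≠ z) :
    x ^ 2 ≠ y ^ 2 ∨ x ^ 2 ≠ z ^ 2 := by
  by_contra hc
  push_neg at hc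
  obtain ⟨h1, h2⟩ := hc
  have e1 : (x - y) * (x + y) = 0 := by linear_combination h1
  have e2 : (x - z) * (x + z) = 0 := by linear_combination h2
  rcases mul_eq_zero.1 e1 with h | h
  · exact hxy (sub_eq_zero.1 h)
  rcases mul_eq_zero.1 e2 with h' | h'
  · exact hxz (sub_eq_zero.1 h')
  exact hyz (by linarith)

private lemma cubic_aux13 (E C x1 x2 x3 x4 : ℝ) (hE : E ≠ 0)
    (r1 : 2 * E * x1 ^ 3 - C * x1 ^ 2 + C = 0)
    (r2 : 2 * E * x2 ^ 3 - C * x2 ^ 2 + C = 0)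
    (r3 : 2 * E * x3 ^ 3 - C * x3 ^ 2 + C = 0)
    (r4 : 2 * E * x4 ^ 3 - C * x4 ^ 2 + C = 0)
    (h12 : x1 ≠ x2) (h13 : x1 ≠ x3) (h14 : x1 ≠ x4)
    (h23 : x2 ≠ x3) (h24 : x2 ≠ x4) (h34 : x3 ≠ x4) : False := by
  have q : ∀ y z : ℝ, 2 * E * y ^ 3 - C * y ^ 2 + C = 0 → 2 * E * z ^ 3 - C * z ^ 2 + C = 0 →
      y ≠ z → 2 * E * (y ^ 2 + y * z + z ^ 2) - C * (y + z) = 0 := by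
    intro y z ry rz hyz
    have h : (y - z) * (2 * E * (y ^ 2 + y * z + z ^ 2) - C * (y + z)) = 0 := by
      linear_combination ry - rz
    rcases mul_eq_zero.1 h with h | h
    · exact absurd (sub_eq_zero.1 h) hyz
    · exact h
  have s : ∀ z : ℝ, 2 * E * (x1 ^ 2 + x1 * z + z ^ 2) - C * (x1 + z) = 0 →
      2 * E * (x2 ^ 2 + x2 * z + z ^ 2) - C * (x2 + z) = 0 →
      2 * E * (x1 + x2 + z) - C = 0 := by
    intro z qa qb
    have h : (x1 - x2) * (2 * E * (x1 + x2 + z) - C) = 0 := by linear_combination qa - qb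
    rcases mul_eq_zero.1 h with h | h
    · exact absurd (sub_eq_zero.1 h) h12
    · exact h
  have s3 := s x3 (q x1 x3 r1 r3 h13) (q x2 x3 r2 r3 h23)
  have s4 := s x4 (q x1 x4 r1 r4 h14) (q x2 x4 r2 r4 h24)
  have hz : E * (x3 - x4) = 0 := by linear_combination s3 / 2 - s4 / 2
  rcases mul_eq_zero.1 hz with h | h
  · exact hE h
  · exact h34 (by linarith [sub_eq_zero.1 h])

theorem stmt_13 (α β γ δ : ℝ) (hαβ : α < β) (hγδ : γ < δ) (f g : ℝ → ℝ)
    (hf : ContDiffOn ℝ (⊤ : ℕ∞) f (Set.Ioo α β)) (hg : ContDiffOn ℝ (⊤ : ℕ∞) g (Set.Ioo γ δ))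
    (hf0 : ∀ u ∈ Set.Ioo α β, deriv f u ≠ 0 ∧ deriv (deriv f) u ≠ 0)
    (hg0 : ∀ v ∈ Set.Ioo γ δ, deriv g v ≠ 0 ∧ deriv (deriv g) v ≠ 0)
    (hode : ∀ u ∈ Set.Ioo α β, ∀ v ∈ Set.Ioo γ δ,
      2 * (deriv g v) ^ 3 - 2 * (deriv f u) ^ 2 * deriv g v
        + (deriv g v) ^ 2 * deriv (deriv f) u + (deriv f u) ^ 2 * deriv (deriv g) v
        - deriv (deriv f) u + deriv (deriv g) v - 2 * deriv g v = 0) :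
    False := by
  have hca : ContinuousOn (deriv f) (Set.Ioo α β) :=
    hf.continuousOn_deriv_of_isOpen isOpen_Ioo (by simp)
  have hcb : ContinuousOn (deriv g) (Set.Ioo γ δ) :=
    hg.continuousOn_deriv_of_isOpen isOpen_Ioo (by simp)
  -- injectivity of the first derivatives via Rolle
  have hainj : ∀ x ∈ Set.Ioo α β, ∀ y ∈ Set.Ioo α β, x < y → deriv f x ≠ deriv f y := by
    intro x hx y hy hxy heq
    obtain ⟨c, hc, hc0⟩ := exists_deriv_eq_zero hxy
      (hca.mono (Set.Icc_subset_Ioo hx.1 hy.2)) heq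
    exact (hf0 c ⟨hx.1.trans hc.1, hc.2.trans hy.2⟩).2 hc0
  have hbinj : ∀ x ∈ Set.Ioo γ δ, ∀ y ∈ Set.Ioo γ δ, x < y → deriv g x ≠ deriv g y := by
    intro x hx y hy hxy heq
    obtain ⟨c, hc, hc0⟩ := exists_deriv_eq_zero hxy
      (hcb.mono (Set.Icc_subset_Ioo hx.1 hy.2)) heq
    exact (hg0 c ⟨hx.1.trans hc.1, hc.2.trans hy.2⟩).2 hc0
  -- sample points in (α, β)
  have hu1 : α + (β - α) / 4 ∈ Set.Ioo α β := ⟨by linarith, by linarith⟩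
  have hu2 : α + (β - α) / 2 ∈ Set.Ioo α β := ⟨by linarith, by linarith⟩
  have hu3 : α + (β - α) * 3 / 4 ∈ Set.Ioo α β := ⟨by linarith, by linarith⟩
  -- sample points in (γ, δ)
  have hw1 : γ + (δ - γ) / 5 ∈ Set.Ioo γ δ := ⟨by linarith, by linarith⟩
  have hw2 : γ + (δ - γ) * 2 / 5 ∈ Set.Ioo γ δ := ⟨by linarith, by linarith⟩
  have hw3 : γ + (δ - γ) * 3 / 5 ∈ Set.Ioo γ δ := ⟨by linarith, by linarith⟩
  have hw4 : γ + (δ - γ) * 4 / 5 ∈ Set.Ioo γ δ := ⟨by linarith, by linarith⟩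
  -- two u-points whose derivative squares differ
  obtain ⟨u', hu', u'', hu'', hd⟩ :
      ∃ x ∈ Set.Ioo α β, ∃ y ∈ Set.Ioo α β, (deriv f x) ^ 2 ≠ (deriv f y) ^ 2 := by
    have a12 := hainj _ hu1 _ hu2 (by linarith)
    have a13 := hainj _ hu1 _ hu3 (by linarith)
    have a23 := hainj _ hu2 _ hu3 (by linarith)
    rcases sq_aux13 a12 a13 a23 with h | h
    · exact ⟨_, hu1, _, hu2, h⟩
    · exact ⟨_, hu1, _, hu3, h⟩
  -- two v-points whose derivative squares differ
  obtain ⟨vA, hvA, vB, hvB, hbsq⟩ :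
      ∃ x ∈ Set.Ioo γ δ, ∃ y ∈ Set.Ioo γ δ, (deriv g x) ^ 2 ≠ (deriv g y) ^ 2 := by
    have b12 := hbinj _ hw1 _ hw2 (by linarith)
    have b13 := hbinj _ hw1 _ hw3 (by linarith)
    have b23 := hbinj _ hw2 _ hw3 (by linarith)
    rcases sq_aux13 b12 b13 b23 with h | h
    · exact ⟨_, hw1, _, hw2, h⟩
    · exact ⟨_, hw1, _, hw3, h⟩
  set a := deriv f with ha
  set A := deriv a with hA
  set b := deriv g with hb
  set B := deriv b with hB
  set e := (b vA) ^ 2 - (b vB) ^ 2 with he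
  set c1 := B vA - B vB - 2 * b vA + 2 * b vB with hc1
  set c2 := 2 * ((b vA) ^ 3 - (b vB) ^ 3) with hc2
  have hene : e ≠ 0 := sub_ne_zero.2 hbsq
  have hdne : (a u') ^ 2 - (a u'') ^ 2 ≠ 0 := sub_ne_zero.2 hd
  -- separate the u-dependence
  have eq1 : ∀ u ∈ Set.Ioo α β, A u * e = -((a u) ^ 2) * c1 - c1 - c2 := by
    intro u hu
    have h1 := hode u hu vA hvA
    have h2 := hode u hu vB hvB
    rw [he, hc1, hc2]
    linear_combination h1 - h2
  -- coefficient of a² must vanish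
  have eq2 : ∀ v ∈ Set.Ioo γ δ, -c1 * ((b v) ^ 2 - 1) + e * (B v - 2 * b v) = 0 := by
    intro v hv
    have h1 := hode u' hu' v hv
    have h2 := hode u'' hu'' v hv
    have e1 := eq1 u' hu'
    have e2 := eq1 u'' hu''
    have key : ((a u') ^ 2 - (a u'') ^ 2) * (-c1 * ((b v) ^ 2 - 1) + e * (B v - 2 * b v)) = 0 := by
      linear_combination e * h1 - e * h2 - ((b v) ^ 2 - 1) * e1 + ((b v) ^ 2 - 1) * e2
    rcases mul_eq_zero.1 key with h | h
    · exact absurd h hdne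
    · exact h
  -- the constant part must vanish
  have eq3 : ∀ v ∈ Set.Ioo γ δ,
      (-c1 - c2) * ((b v) ^ 2 - 1) + e * (2 * (b v) ^ 3 + B v - 2 * b v) = 0 := by
    intro v hv
    have h1 := hode u' hu' v hv
    have e1 := eq1 u' hu'
    have p := eq2 v hv
    linear_combination e * h1 - ((b v) ^ 2 - 1) * e1 - (a u') ^ 2 * p
  -- the resulting cubic identity in b v
  have cubic : ∀ v ∈ Set.Ioo γ δ, 2 * e * (b v) ^ 3 - c2 * (b v) ^ 2 + c2 = 0 := by
    intro v hv
    linear_combination eq3 v hv - eq2 v hv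
  exact cubic_aux13 e c2 (b (γ + (δ - γ) / 5)) (b (γ + (δ - γ) * 2 / 5))
    (b (γ + (δ - γ) * 3 / 5)) (b (γ + (δ - γ) * 4 / 5)) hene
    (cubic _ hw1) (cubic _ hw2) (cubic _ hw3) (cubic _ hw4)
    (hbinj _ hw1 _ hw2 (by linarith)) (hbinj _ hw1 _ hw3 (by linarith))
    (hbinj _ hw1 _ hw4 (by linarith)) (hbinj _ hw2 _ hw3 (by linarith))
    (hbinj _ hw2 _ hw4 (by linarith)) (hbinj _ hw3 _ hw4 (by linarith))
end

section
/- Let c̄₀ ≠ 0 and suppose f satisfies f''(u) - c̄₀ (1 + f'(u)²) = 0 and g satisfies g''(v) + c̄₀ (g'(v)² - 1) = 0 on open intervals with |g'| < 1. Then f(u) + g(v) = (1/c̄₀) ln( |e^{c̄₀v} - c₃ e^{-c̄₀v}| / |cos(c̄₀u + c₄)| ) + b for suitable constants c₃ ≠ 0, c₄, b (up to relabeling of variables: f solves the cos-type equation in u and g the exponential-type equation in v). -/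
/-!
With `p = f'` and `q = g'` both equations are Riccati equations, `p' = c₀ (1 + p²)` and
`q' = c₀ (1 - q²)`, so `arctan p - c₀ u` and `artanh q - c₀ v` are constant: `f' = tan (c₀ u + c₄)`
and `g' = tanh (c₀ v + k)`. Integrating once more, `f = -(1/c₀) log cos (c₀ u + c₄) + b₁` and
`g = (1/c₀) log cosh (c₀ v + k) + b₂`, and `2 e^{-k} cosh (c₀ v + k) = e^{c₀ v} + e^{-2k} e^{-c₀ v}`
gives the stated form with `c₃ = -e^{-2k}`.
-/

open Real Set

theorem Real.hasDerivAt_artanh {x : ℝ} (hx : x ∈ Ioo (-1) 1) :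
    HasDerivAt artanh (1 / (1 - x ^ 2)) x := by
  have h₁ : 0 < 1 + x := by linarith [hx.1]
  have h₂ : 0 < 1 - x := by linarith [hx.2]
  have hlog : HasDerivAt (fun y => 1 / 2 * (log (1 + y) - log (1 - y))) (1 / (1 - x ^ 2)) x := by
    refine ((((hasDerivAt_id x).const_add 1).log h₁.ne').sub
      (((hasDerivAt_id x).const_sub 1).log h₂.ne')).const_mul (1 / 2) |>.congr_deriv ?_
    have : 1 - x ^ 2 ≠ 0 := by nlinarith
    simp only [id]
    field_simp
    ring
  refine hlog.congr_of_eventuallyEq ?_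
  filter_upwards [Ioo_mem_nhds hx.1 hx.2] with y hy
  rw [artanh_eq_half_log (Ioo_subset_Icc_self hy),
    log_div (by linarith [hy.1]) (by linarith [hy.2])]

theorem IsOpen.exists_eq_const_of_hasDerivAt_zero_s19 {s : Set ℝ} (hs : IsOpen s)
    (hs' : IsPreconnected s) {F : ℝ → ℝ} (hF : ∀ x ∈ s, HasDerivAt F 0 x) :
    ∃ k, ∀ x ∈ s, F x = k :=
  hs.exists_is_const_of_deriv_eq_zero hs'
    (fun x hx => (hF x hx).differentiableAt.differentiableWithinAt) (fun x hx => (hF x hx).deriv)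

theorem Real.exp_add_exp_mul_exp_neg_eq_mul_cosh (t k : ℝ) :
    exp t + exp (-(2 * k)) * exp (-t) = 2 * exp (-k) * cosh (t + k) := by
  rw [cosh_eq, mul_div_assoc', mul_div_right_comm, mul_div_cancel_left₀ _ two_ne_zero, mul_add,
    ← exp_add, ← exp_add, ← exp_add]
  ring_nf

namespace IsOpen

variable {s : Set ℝ} {c k : ℝ} {y F : ℝ → ℝ}

theorem exists_eq_tan_of_hasDerivAt (hs : IsOpen s) (hs' : IsPreconnected s)
    (hy : ∀ x ∈ s, HasDerivAt y (c * (1 + y x ^ 2)) x) :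
    ∃ k, ∀ x ∈ s, 0 < cos (c * x + k) ∧ y x = tan (c * x + k) := by
  obtain ⟨k, hk⟩ := hs.exists_eq_const_of_hasDerivAt_zero_s19 hs' (F := fun x => arctan (y x) - c * x)
    fun x hx => by
      refine ((hasDerivAt_arctan _).comp x (hy x hx)).sub ((hasDerivAt_id x).const_mul c)
        |>.congr_deriv ?_
      field_simp
      ring
  refine ⟨k, fun x hx => ?_⟩
  rw [show c * x + k = arctan (y x) by linarith [hk x hx]]
  exact ⟨cos_arctan_pos _, (tan_arctan _).symm⟩

theorem exists_eq_tanh_of_hasDerivAt (hs : IsOpen s) (hs' : IsPreconnected s)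
    (hy : ∀ x ∈ s, HasDerivAt y (c * (1 - y x ^ 2)) x)
    (hy₁ : ∀ x ∈ s, |y x| < 1) :
    ∃ k, ∀ x ∈ s, y x = tanh (c * x + k) := by
  have hmem : ∀ x ∈ s, y x ∈ Ioo (-1) 1 := fun x hx => abs_lt.mp (hy₁ x hx)
  obtain ⟨k, hk⟩ := hs.exists_eq_const_of_hasDerivAt_zero_s19 hs' (F := fun x => artanh (y x) - c * x)
    fun x hx => by
      have : 1 - y x ^ 2 ≠ 0 := by nlinarith [(hmem x hx).1, (hmem x hx).2]
      refine ((hasDerivAt_artanh (hmem x hx)).comp x (hy x hx)).sub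
        ((hasDerivAt_id x).const_mul c) |>.congr_deriv ?_
      field_simp
      ring
  refine ⟨k, fun x hx => ?_⟩
  rw [show c * x + k = artanh (y x) by linarith [hk x hx], tanh_artanh (hmem x hx)]

theorem exists_eq_neg_log_cos_of_hasDerivAt_tan (hs : IsOpen s) (hs' : IsPreconnected s)
    (hc : c ≠ 0) (hcos : ∀ x ∈ s, 0 < cos (c * x + k))
    (hF : ∀ x ∈ s, HasDerivAt F (tan (c * x + k)) x) :
    ∃ b, ∀ x ∈ s, F x = -(1 / c) * log (cos (c * x + k)) + b := by
  obtain ⟨b, hb⟩ := hs.exists_eq_const_of_hasDerivAt_zero_s19 hs'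
    (F := fun x => F x + 1 / c * log (cos (c * x + k))) fun x hx => by
      have haff : HasDerivAt (fun x => c * x + k) c x := by
        simpa using ((hasDerivAt_id x).const_mul c).add_const k
      refine (hF x hx).add ((((hasDerivAt_cos _).comp x haff).log (hcos x hx).ne').const_mul
        (1 / c)) |>.congr_deriv ?_
      simp only [Function.comp_apply]
      rw [tan_eq_sin_div_cos]
      field_simp
      ring
  exact ⟨b, fun x hx => by linarith [hb x hx]⟩

theorem exists_eq_log_cosh_of_hasDerivAt_tanh (hs : IsOpen s) (hs' : IsPreconnected s)
    (hc : c ≠ 0)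
    (hF : ∀ x ∈ s, HasDerivAt F (tanh (c * x + k)) x) :
    ∃ b, ∀ x ∈ s, F x = 1 / c * log (cosh (c * x + k)) + b := by
  obtain ⟨b, hb⟩ := hs.exists_eq_const_of_hasDerivAt_zero_s19 hs'
    (F := fun x => F x - 1 / c * log (cosh (c * x + k))) fun x hx => by
      have haff : HasDerivAt (fun x => c * x + k) c x := by
        simpa using ((hasDerivAt_id x).const_mul c).add_const k
      refine (hF x hx).sub ((((hasDerivAt_cosh _).comp x haff).log (cosh_pos _).ne').const_mul
        (1 / c)) |>.congr_deriv ?_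
      simp only [Function.comp_apply]
      rw [tanh_eq_sinh_div_cosh]
      field_simp
      ring
  exact ⟨b, fun x hx => by linarith [hb x hx]⟩

end IsOpen

theorem stmt_19_general (c₀ α β γ δ : ℝ) (hc₀ : c₀ ≠ 0)
    (f g : ℝ → ℝ)
    (hfd : ∀ u ∈ Set.Ioo α β, DifferentiableAt ℝ f u)
    (hfd2 : ∀ u ∈ Set.Ioo α β, DifferentiableAt ℝ (deriv f) u)
    (hgd : ∀ v ∈ Set.Ioo γ δ, DifferentiableAt ℝ g v)
    (hgd2 : ∀ v ∈ Set.Ioo γ δ, DifferentiableAt ℝ (deriv g) v)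
    (hgsp : ∀ v ∈ Set.Ioo γ δ, |deriv g v| < 1)
    (hfode : ∀ u ∈ Set.Ioo α β,
      deriv (deriv f) u - c₀ * (1 + (deriv f u) ^ 2) = 0)
    (hgode : ∀ v ∈ Set.Ioo γ δ,
      deriv (deriv g) v + c₀ * ((deriv g v) ^ 2 - 1) = 0) :
    ∃ c₃ c₄ b : ℝ, c₃ ≠ 0 ∧ ∀ u ∈ Set.Ioo α β, ∀ v ∈ Set.Ioo γ δ,
      f u + g v = (1 / c₀) *
        Real.log (|Real.exp (c₀ * v) - c₃ * Real.exp (-(c₀ * v))|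
          / |Real.cos (c₀ * u + c₄)|) + b := by
  have hf'' : ∀ u ∈ Ioo α β, HasDerivAt (deriv f) (c₀ * (1 + deriv f u ^ 2)) u :=
    fun u hu => (hfd2 u hu).hasDerivAt.congr_deriv (by linarith [hfode u hu])
  have hg'' : ∀ v ∈ Ioo γ δ, HasDerivAt (deriv g) (c₀ * (1 - deriv g v ^ 2)) v :=
    fun v hv => (hgd2 v hv).hasDerivAt.congr_deriv (by linarith [hgode v hv])
  obtain ⟨c₄, hf'⟩ := isOpen_Ioo.exists_eq_tan_of_hasDerivAt isPreconnected_Ioo hf''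
  obtain ⟨b₁, hf⟩ := isOpen_Ioo.exists_eq_neg_log_cos_of_hasDerivAt_tan isPreconnected_Ioo hc₀
    (fun u hu => (hf' u hu).1) fun u hu => (hf' u hu).2 ▸ (hfd u hu).hasDerivAt
  obtain ⟨k, hg'⟩ := isOpen_Ioo.exists_eq_tanh_of_hasDerivAt isPreconnected_Ioo hg'' hgsp
  obtain ⟨b₂, hg⟩ := isOpen_Ioo.exists_eq_log_cosh_of_hasDerivAt_tanh isPreconnected_Ioo hc₀
    fun v hv => hg' v hv ▸ (hgd v hv).hasDerivAt
  refine ⟨-exp (-(2 * k)), c₄, b₁ + b₂ - 1 / c₀ * (log 2 - k), by simp [exp_ne_zero],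
    fun u hu v hv => ?_⟩
  have hcos := (hf' u hu).1
  rw [neg_mul, sub_neg_eq_add, exp_add_exp_mul_exp_neg_eq_mul_cosh, abs_of_pos (by positivity),
    abs_of_pos hcos, log_div (by positivity) hcos.ne', log_mul (by positivity) (cosh_pos _).ne',
    log_mul two_ne_zero (exp_ne_zero _), log_exp, hf u hu, hg v hv]
  ring

theorem stmt_19 (c₀ α β γ δ : ℝ) (hc₀ : c₀ ≠ 0) (hαβ : α < β) (hγδ : γ < δ)
    (f g : ℝ → ℝ)
    (hfd : ∀ u ∈ Set.Ioo α β, DifferentiableAt ℝ f u)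
    (hfd2 : ∀ u ∈ Set.Ioo α β, DifferentiableAt ℝ (deriv f) u)
    (hgd : ∀ v ∈ Set.Ioo γ δ, DifferentiableAt ℝ g v)
    (hgd2 : ∀ v ∈ Set.Ioo γ δ, DifferentiableAt ℝ (deriv g) v)
    (hgsp : ∀ v ∈ Set.Ioo γ δ, |deriv g v| < 1)
    (hfode : ∀ u ∈ Set.Ioo α β,
      deriv (deriv f) u - c₀ * (1 + (deriv f u) ^ 2) = 0)
    (hgode : ∀ v ∈ Set.Ioo γ δ,
      deriv (deriv g) v + c₀ * ((deriv g v) ^ 2 - 1) = 0) :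
    ∃ c₃ c₄ b : ℝ, c₃ ≠ 0 ∧ ∀ u ∈ Set.Ioo α β, ∀ v ∈ Set.Ioo γ δ,
      f u + g v = (1 / c₀) *
        Real.log (|Real.exp (c₀ * v) - c₃ * Real.exp (-(c₀ * v))|
          / |Real.cos (c₀ * u + c₄)|) + b :=
  stmt_19_general c₀ α β γ δ hc₀ f g hfd hfd2 hgd hgd2 hgsp hfode hgode
end
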